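/- Let C' be a finite subset of S^d, contained in an open hemisphere, and suppose that {x ∈ S^d : ⟨x,c⟩ > 0 for all c ∈ C'} ⊆ C(e_{d+1}, α) for some α ∈ (0, π/2). Then the cap C(e_{d+1}, π/2 - α) is contained in the spherical convex hull of C'. -/

import Mathlib

open Real Set
open scoped RealInnerProductSpace

noncomputable section

/-- Euclidean space `ℝ^n`. -/
abbrev E (n : ℕ) := EuclideanSpace ℝ (Fin n)

/-- The unit sphere `S^{n-1} ⊆ ℝ^n`. -/
def unitSphere (n : ℕ) : Set (E n) := Metric.sphere 0 1

/-- The spherical cap with center `v` and spherical radius `ρ`. -/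
def cap {n : ℕ} (v : E n) (ρ : ℝ) : Set (E n) := {u ∈ unitSphere n | Real.cos ρ ≤ ⟪u, v⟫}

/-- The last standard basis vector `e_{d+1}` of `ℝ^{d+1}`. -/
def eLast (d : ℕ) : E (d + 1) := EuclideanSpace.single (Fin.last d) 1

/-- Central projection from the origin onto the hyperplane `{x : x_{d+1} = 1}`,
identified with `ℝ^d` (with origin `e_{d+1}`). -/
def PN {d : ℕ} (x : E (d + 1)) : E d := WithLp.toLp 2 (fun i : Fin d => x i.castSucc / x (Fin.last d))

/-- Points of the shorter great-circle arc between unit vectors `u` and `v`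
(for `u`, `v` in an open hemisphere): normalized nonnegative combinations. -/
def arcPts {n : ℕ} (u v : E n) : Set (E n) :=
  {w | ∃ a b : ℝ, 0 ≤ a ∧ 0 ≤ b ∧ a • u + b • v ≠ 0 ∧ w = ‖a • u + b • v‖⁻¹ • (a • u + b • v)}

/-- A set `K ⊆ S^{n-1}` is spherically convex if it is the whole sphere, or it is
contained in an open hemisphere and contains the shorter arc between any two of its points. -/
def IsSphConvex {n : ℕ} (K : Set (E n)) : Prop :=
  K = unitSphere n ∨
    ((∃ v : E n, ∀ x ∈ K, 0 < ⟪x, v⟫) ∧ ∀ u ∈ K, ∀ w ∈ K, arcPts u w ⊆ K)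

/-- The spherical convex hull: the intersection of all spherically convex subsets
of the sphere containing `C`. -/
def sconv {n : ℕ} (C : Set (E n)) : Set (E n) :=
  ⋂₀ {K | IsSphConvex K ∧ K ⊆ unitSphere n ∧ C ⊆ K}

/-- The polar of a set `S ⊆ ℝ^n`. -/
def polar {n : ℕ} (S : Set (E n)) : Set (E n) := {x | ∀ s ∈ S, ⟪x, s⟫ ≤ 1}

end

/-! A unit vector in the cone spanned by `C'` lies in every spherically convex set containing
`C'`, since normalized conic combinations are reached from `C'` by shorter arcs. If a point `u` of
the cap `C(e_{d+1}, π/2 - α)` were outside that cone, then, because `C'` lies in an open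
hemisphere, separating the ray through `u` from the compact set `conv C'` and perturbing slightly
gives a unit vector `x` with `⟪x, c⟫ > 0` on `C'` and `⟪x, u⟫ < 0`. Such an `x` is in the
spherical polar, hence at angle at most `α` from `e_{d+1}`, while `u` is at angle at most
`π/2 - α`; the triangle inequality for angles then forces `⟪x, u⟫ ≥ 0`. -/

open InnerProductGeometry NormedSpace Filter Topology

section InnerProductSpace

variable {F : Type*} [NormedAddCommGroup F] [InnerProductSpace ℝ F]

theorem angle_le_of_cos_le_inner {x e : F} (hx : ‖x‖ = 1) (he : ‖e‖ = 1) {β : ℝ}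
    (hβ₀ : 0 ≤ β) (hβπ : β ≤ π) (h : cos β ≤ ⟪x, e⟫) : angle x e ≤ β := by
  rw [← arccos_cos hβ₀ hβπ, angle, hx, he, mul_one, div_one]
  exact arccos_le_arccos h

theorem inner_nonneg_of_cos_le_inner {x u e : F} (hx : ‖x‖ = 1) (hu : ‖u‖ = 1) (he : ‖e‖ = 1)
    {β γ : ℝ} (hβ : 0 ≤ β) (hγ : 0 ≤ γ) (hβγ : β + γ ≤ π / 2)
    (hxe : cos β ≤ ⟪x, e⟫) (hue : cos γ ≤ ⟪u, e⟫) : 0 ≤ ⟪x, u⟫ := by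
  have hxu : angle x u ≤ π / 2 := calc
    angle x u ≤ angle x e + angle e u := angle_le_angle_add_angle x e u
    _ ≤ β + γ := by
      rw [angle_comm e u]
      gcongr
      · exact angle_le_of_cos_le_inner hx he hβ (by linarith [pi_pos]) hxe
      · exact angle_le_of_cos_le_inner hu he hγ (by linarith [pi_pos]) hue
    _ ≤ π / 2 := hβγ
  rw [inner_eq_cos_angle_of_norm_eq_one hx hu]
  exact cos_nonneg_of_mem_Icc ⟨by linarith [angle_nonneg x u, pi_pos], hxu⟩

theorem zero_notMem_convexHull_of_inner_pos {s : Set F} {v : F} (hv : ∀ x ∈ s, 0 < ⟪x, v⟫) :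
    (0 : F) ∉ convexHull ℝ s := fun h0 => by
  have : (0 : ℝ) < ⟪(0 : F), v⟫ :=
    convexHull_min (t := {x | 0 < ⟪x, v⟫}) hv
      (convex_halfSpace_gt ((innerₗ F).flip v).isLinear 0) h0
  simp at this

theorem smul_notMem_convexHull_of_notMem_hull {s : Set F} {u v : F} (hv : ∀ x ∈ s, 0 < ⟪x, v⟫)
    (hu : u ∉ PointedCone.hull ℝ s) {t : ℝ} (ht : 0 ≤ t) : t • u ∉ convexHull ℝ s := by
  intro htu
  rcases ht.eq_or_lt with rfl | ht
  · exact zero_notMem_convexHull_of_inner_pos hv (by simpa using htu)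
  · have := convexHull_min PointedCone.subset_hull (PointedCone.hull ℝ s).convex htu
    exact hu <| by
      simpa [smul_smul, ht.ne'] using (PointedCone.hull ℝ s).smul_mem (inv_nonneg.2 ht.le) this

theorem exists_forall_inner_pos_of_ray_disjoint [CompleteSpace F] {D : Set F} {u : F}
    (hDconv : Convex ℝ D) (hDcomp : IsCompact D) (hray : ∀ {t : ℝ}, 0 ≤ t → t • u ∉ D) :
    ∃ y, (∀ d ∈ D, 0 < ⟪y, d⟫) ∧ ⟪y, u⟫ ≤ 0 := by
  set R := (fun t : ℝ => t • u) '' Ici 0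
  have hRconv : Convex ℝ R := (convex_Ici 0).linear_image (LinearMap.toSpanSingleton ℝ F u)
  have hRclosed : IsClosed R := isClosedMap_smul_left u _ isClosed_Ici
  have hdisj : Disjoint D R := by
    rw [Set.disjoint_right]
    rintro _ ⟨t, ht, rfl⟩
    exact hray ht
  obtain ⟨f, s, r, hfD, hsr, hfR⟩ :=
    geometric_hahn_banach_compact_closed hDconv hDcomp hRconv hRclosed hdisj
  have hr : r < 0 := by simpa using hfR 0 ⟨0, self_mem_Ici, zero_smul ℝ u⟩
  refine ⟨-(InnerProductSpace.toDual ℝ F).symm f, fun d hd => ?_, ?_⟩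
  · rw [inner_neg_left, InnerProductSpace.toDual_symm_apply]
    linarith [hfD d hd]
  · rw [inner_neg_left, InnerProductSpace.toDual_symm_apply, neg_nonpos]
    by_contra! hfu
    have := hfR ((r / f u) • u) ⟨r / f u, div_nonneg_of_nonpos hr.le hfu.le, rfl⟩
    rw [map_smul, smul_eq_mul, div_mul_cancel₀ _ hfu.ne] at this
    exact this.false

theorem exists_norm_eq_one_forall_inner_pos_of_inner_nonpos {C : Finset F} {u y : F} (hu : u ≠ 0)
    (hyC : ∀ c ∈ C, 0 < ⟪y, c⟫) (hyu : ⟪y, u⟫ ≤ 0) :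
    ∃ x, ‖x‖ = 1 ∧ (∀ c ∈ C, 0 < ⟪x, c⟫) ∧ ⟪x, u⟫ < 0 := by
  have hopen : IsOpen {x : F | ∀ c ∈ C, 0 < ⟪x, c⟫} := by
    simp only [ofPred_forall]
    exact isOpen_biInter_finset fun c _ => isOpen_lt continuous_const (by fun_prop)
  have hlim : Tendsto (fun ε : ℝ => y - ε • u) (𝓝[>] 0) (𝓝 y) := by
    have : Continuous fun ε : ℝ => y - ε • u := by fun_prop
    simpa using (this.tendsto 0).mono_left nhdsWithin_le_nhds
  obtain ⟨ε, hεC, hε⟩ := ((hlim.eventually (hopen.mem_nhds hyC)).and self_mem_nhdsWithin).exists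
  set w := y - ε • u
  have hwu : ⟪w, u⟫ < 0 := by
    have : 0 < ε * ‖u‖ ^ 2 := mul_pos hε (by positivity)
    rw [inner_sub_left, real_inner_smul_left, real_inner_self_eq_norm_sq]
    linarith
  have hw : w ≠ 0 := by
    rintro h
    simp [h] at hwu
  refine ⟨normalize w, norm_normalize_eq_one_iff.2 hw, fun c hc => ?_, ?_⟩ <;>
    rw [NormedSpace.normalize, real_inner_smul_left]
  · exact mul_pos (by positivity) (hεC c hc)
  · exact mul_neg_of_pos_of_neg (by positivity) hwu

end InnerProductSpace

theorem normalize_mem_of_mem_hull {n : ℕ} {C K : Set (E n)} (hCK : C ⊆ K)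
    (hC : C ⊆ unitSphere n) (harc : ∀ u ∈ K, ∀ w ∈ K, arcPts u w ⊆ K)
    {x : E n} (hx : x ∈ PointedCone.hull ℝ C) (hx0 : x ≠ 0) : normalize x ∈ K := by
  induction hx using Submodule.span_induction with
  | mem c hc =>
    rw [normalize_eq_self_of_norm_eq_one (mem_sphere_zero_iff_norm.1 (hC hc))]
    exact hCK hc
  | zero => exact absurd rfl hx0
  | add x y _ _ ihx ihy =>
    rcases eq_or_ne x 0 with rfl | hx
    · simpa using ihy (by simpa using hx0)
    rcases eq_or_ne y 0 with rfl | hy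
    · simpa using ihx (by simpa using hx0)
    refine harc _ (ihx hx) _ (ihy hy) ⟨‖x‖, ‖y‖, norm_nonneg _, norm_nonneg _, ?_, ?_⟩ <;>
      rw [norm_smul_normalize, norm_smul_normalize]
    · exact hx0
    · rfl
  | smul a x _ ihx =>
    obtain ⟨a, ha⟩ := a
    have hx : x ≠ 0 := fun h => hx0 (by simp [h])
    have ha : 0 < a := ha.lt_of_ne fun h => hx0 (by simp [← h])
    exact (normalize_smul_of_pos ha x).symm ▸ ihx hx

/-- Spherical duality step: if the spherical polar of a finite `C'` (contained in an open
hemisphere) is contained in the cap `C(e_{d+1}, α)`, then `C(e_{d+1}, π/2 - α) ⊆ sconv C'`. -/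
theorem cap_subset_sconv_of_spolar (d : ℕ) (C' : Finset (E (d + 1)))
    (hC' : (C' : Set (E (d + 1))) ⊆ unitSphere (d + 1))
    (hhemi : ∃ v : E (d + 1), ∀ x ∈ C', 0 < ⟪x, v⟫)
    (α : ℝ) (hα : α ∈ Set.Ioo 0 (Real.pi / 2))
    (h : {x ∈ unitSphere (d + 1) | ∀ c ∈ C', 0 < ⟪x, c⟫} ⊆ cap (eLast d) α) :
    cap (eLast d) (Real.pi / 2 - α) ⊆ sconv (C' : Set (E (d + 1))) := by
  obtain ⟨v, hv⟩ := hhemi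
  rintro u ⟨hu_sphere, hue⟩
  have hu : ‖u‖ = 1 := mem_sphere_zero_iff_norm.1 hu_sphere
  have hu₀ : u ≠ 0 := norm_ne_zero_iff.1 (hu ▸ one_ne_zero)
  have hu_hull : u ∈ PointedCone.hull ℝ (C' : Set (E (d + 1))) := by
    by_contra hu_hull
    obtain ⟨y, hyC, hyu⟩ := exists_forall_inner_pos_of_ray_disjoint (convex_convexHull ℝ _)
      (C'.finite_toSet.isCompact_convexHull ℝ)
      (smul_notMem_convexHull_of_notMem_hull hv hu_hull)
    obtain ⟨x, hx, hxC, hxu⟩ :=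
      exists_norm_eq_one_forall_inner_pos_of_inner_nonpos (C := C') hu₀
        (fun c hc => hyC c (subset_convexHull ℝ _ hc)) hyu
    have hxe := (h ⟨mem_sphere_zero_iff_norm.2 hx, hxC⟩).2
    have := inner_nonneg_of_cos_le_inner hx hu (by simp [eLast]) hα.1.le (by linarith [hα.2])
      (by linarith) hxe hue
    linarith
  refine Set.mem_sInter.2 ?_
  rintro K ⟨hK | ⟨-, harc⟩, -, hCK⟩
  · exact hK ▸ hu_sphere
  · simpa [normalize_eq_self_of_norm_eq_one hu] using
      normalize_mem_of_mem_hull hCK hC' harc hu_hull hu₀
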